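/- arXiv:1410.3042 — 2 statements merged into one kernel-verified Lean document; each statement's English description precedes it below -/
import Mathlib

section
/- (Lemma) 𝔠 is a subring of ℂ which is closed under complex conjugation: 0, 1 ∈ 𝔠, and for all a, b ∈ 𝔠 one has a + b ∈ 𝔠, −a ∈ 𝔠, ab ∈ 𝔠, and a* ∈ 𝔠. -/
/-!
Rotating a constructible point by `π / 3` about another one is intersecting two circles, so
three such rotations give point reflections and hence negation, and two of them carry any
constructible distance to any constructible centre; completing parallelograms then gives
addition. Conjugation is the reflection in the real axis through the circles about `0` and `1`.
Inversion in the unit circle gives `z⁻¹` for `‖z‖ ≥ 1 / 2`, and `z⁻¹ = n * (n * z)⁻¹` reduces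
the general case to it. Finally `x ^ 2 = ((x - 1)⁻¹ - x⁻¹)⁻¹ + x`, `z / n = (n * z⁻¹)⁻¹` and
`a * b = ((a + b) ^ 2 - a ^ 2 - b ^ 2) / 2` give products.
-/

/-- The set 𝔠 of compass-constructable points in the plane ℂ: the smallest set
containing 0 and 1 and closed under taking intersection points of two distinct
circles whose centers and radius-defining points are constructable. -/
inductive Compass : ℂ → Prop
  | zero : Compass 0
  | one : Compass 1
  | circle_circle (a b c d z : ℂ) :
      Compass a → Compass b → Compass c → Compass d →
      ‖z - a‖ = ‖b - a‖ →
      ‖z - c‖ = ‖d - c‖ →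
      {w : ℂ | ‖w - a‖ = ‖b - a‖} ≠
        {w : ℂ | ‖w - c‖ = ‖d - c‖} →
      Compass z

open Complex ComplexConjugate Metric

theorem radius_eq_zero_of_sphere_subset {E : Type*} [NormedAddCommGroup E] [InnerProductSpace ℝ E]
    {a c : E} {r s : ℝ} (hr : 0 ≤ r) (hac : a ≠ c) (h : sphere a r ⊆ sphere c s) : r = 0 := by
  set x := a - c
  have hx : ‖x‖ ≠ 0 := norm_ne_zero_iff.2 (sub_ne_zero.2 hac)
  set u := (r / ‖x‖) • x
  have hu : ‖u‖ = r := by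
    rw [norm_smul, Real.norm_eq_abs, abs_div, abs_of_nonneg hr, abs_norm, div_mul_cancel₀ _ hx]
  have hadd : ‖x + u‖ = s := by
    simpa [x, add_sub_right_comm, hu] using h (show a + u ∈ sphere a r by simp [hu])
  have hsub : ‖x - u‖ = s := by
    simpa [x, sub_right_comm, hu] using h (show a - u ∈ sphere a r by simp [hu])
  have hxu : inner ℝ x u = r * ‖x‖ := by
    rw [real_inner_smul_right, real_inner_self_eq_norm_sq]; field_simp
  have h₁ := norm_add_sq_real x u
  have h₂ := norm_sub_sq_real x u
  rw [hadd, hxu] at h₁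
  rw [hsub, hxu] at h₂
  have : r * ‖x‖ = 0 := by linarith
  simpa [hx] using this

theorem sphere_ne_sphere_of_ne {E : Type*} [NormedAddCommGroup E] [InnerProductSpace ℝ E]
    {a c : E} {r s : ℝ} (hr : 0 ≤ r) (hs : 0 ≤ s) (hac : a ≠ c) : sphere a r ≠ sphere c s := by
  intro h
  have hr0 := radius_eq_zero_of_sphere_subset hr hac h.subset
  have hs0 := radius_eq_zero_of_sphere_subset hs hac.symm h.symm.subset
  have : a ∈ sphere c s := h ▸ (by simp [hr0])
  exact hac (by simpa [hs0, sub_eq_zero] using this)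

theorem exists_norm_sub_one_eq_one_and_norm_eq {ρ : ℝ} (h₀ : 0 ≤ ρ) (h₂ : ρ ≤ 2) :
    ∃ w : ℂ, ‖w - 1‖ = 1 ∧ ‖w‖ = ρ := by
  have hconn := (isConnected_sphere (by simp [rank_real_complex]) (1 : ℂ) zero_le_one).isPreconnected
  obtain ⟨w, hw, hρ⟩ := hconn.intermediate_value (a := 0) (b := 2) (by simp) (by norm_num)
    continuous_norm.continuousOn ⟨by simpa using h₀, by simpa using h₂⟩
  exact ⟨w, by simpa [dist_eq_norm] using hw, hρ⟩

theorem norm_conj_sub_one (z : ℂ) : ‖conj z - 1‖ = ‖z - 1‖ := by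
  rw [← norm_conj, map_sub, conj_conj, map_one]

theorem add_conj_eq_norm_sq_of_norm_sub_one {w : ℂ} (h : ‖w - 1‖ = 1) :
    w + conj w = (‖w‖ ^ 2 : ℝ) := by
  have h' : normSq (w - 1) = 1 := by rw [← Complex.sq_norm, h, one_pow]
  simp only [normSq_apply, sub_re, one_re, sub_im, one_im, sub_zero] at h'
  rw [add_conj, Complex.sq_norm, normSq_apply]
  exact_mod_cast (by linear_combination -h' : 2 * w.re = w.re * w.re + w.im * w.im)

/-- The primitive sixth root of unity `exp (π i / 3)`. -/
noncomputable def ω : ℂ := ⟨1 / 2, √3 / 2⟩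

theorem ω_sq : ω ^ 2 = ω - 1 := by
  have h3 : √3 ^ 2 = 3 := Real.sq_sqrt (by norm_num)
  apply Complex.ext <;> simp only [ω, sq, mul_re, mul_im, sub_re, sub_im, one_re, one_im]
  · linear_combination (-1 / 4 : ℝ) * h3
  · ring

theorem norm_ω : ‖ω‖ = 1 := by
  have h : ‖ω‖ ^ 3 = 1 := by
    rw [← norm_pow, show ω ^ 3 = -1 by linear_combination (ω + 1) * ω_sq, norm_neg, norm_one]
  exact (pow_eq_one_iff_of_nonneg (norm_nonneg _) (by norm_num)).1 h

theorem norm_ω_sub_one : ‖ω - 1‖ = 1 := by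
  rw [← ω_sq, norm_pow, norm_ω, one_pow]

namespace Compass

theorem of_norm_sub_eq {a b c d z : ℂ} (ha : Compass a) (hb : Compass b) (hc : Compass c)
    (hd : Compass d) (hac : a ≠ c) (hza : ‖z - a‖ = ‖b - a‖) (hzc : ‖z - c‖ = ‖d - c‖) :
    Compass z :=
  circle_circle a b c d z ha hb hc hd hza hzc <| by
    simpa only [Metric.sphere, dist_eq_norm] using
      sphere_ne_sphere_of_ne (norm_nonneg (b - a)) (norm_nonneg (d - c)) hac

theorem add_sub_mul {p x b d w : ℂ} (hp : Compass p) (hx : Compass x) (hb : Compass b)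
    (hd : Compass d) (hpb : ‖x - p‖ * ‖w‖ = ‖b - p‖) (hxd : ‖x - p‖ * ‖w - 1‖ = ‖d - x‖) :
    Compass (p + (x - p) * w) := by
  rcases eq_or_ne p x with rfl | hpx
  · simpa using hp
  refine of_norm_sub_eq hp hb hx hd hpx ?_ ?_
  · rw [add_sub_cancel_left, norm_mul, hpb]
  · rw [show p + (x - p) * w - x = (x - p) * (w - 1) by ring, norm_mul, hxd]

theorem rotate {p x w : ℂ} (hp : Compass p) (hx : Compass x) (hw : ‖w‖ = 1)
    (hw₁ : ‖w - 1‖ = 1) : Compass (p + (x - p) * w) :=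
  add_sub_mul hp hx hx hp (by rw [hw, mul_one]) (by rw [hw₁, mul_one, norm_sub_rev])

theorem rotate_ω {p x : ℂ} (hp : Compass p) (hx : Compass x) : Compass (p + (x - p) * ω) :=
  hp.rotate hx norm_ω norm_ω_sub_one

theorem rotate_one_sub_ω {p x : ℂ} (hp : Compass p) (hx : Compass x) :
    Compass (p + (x - p) * (1 - ω)) :=
  hp.rotate hx (by rw [norm_sub_rev, norm_ω_sub_one]) (by rw [sub_sub_cancel_left, norm_neg, norm_ω])

/-- `ω ^ 3 = -1`: three rotations by `π / 3` about `a` make a half-turn. -/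
theorem two_mul_sub {a b : ℂ} (ha : Compass a) (hb : Compass b) : Compass (2 * a - b) := by
  convert ha.rotate_ω (ha.rotate_ω (ha.rotate_ω hb)) using 1
  linear_combination (a - b) * (ω + 1) * ω_sq

theorem neg {a : ℂ} (ha : Compass a) : Compass (-a) := by
  simpa using zero.two_mul_sub ha

/-- Euclid's compass equivalence (*Elements* I.2): the distance `‖u - v‖` can be carried to any
constructible centre. -/
theorem exists_norm_sub_eq {a u v : ℂ} (ha : Compass a) (hu : Compass u) (hv : Compass v) :
    ∃ e, Compass e ∧ ‖e - a‖ = ‖u - v‖ := by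
  refine ⟨_, (ha.rotate_ω hv).rotate_one_sub_ω hu, ?_⟩
  rw [show a + (v - a) * ω + (u - (a + (v - a) * ω)) * (1 - ω) - a = (u - v) * (1 - ω) by
    linear_combination (v - a) * ω_sq, norm_mul, norm_sub_rev 1, norm_ω_sub_one, mul_one]

theorem of_norm_sub_eq_norm_sub {a c z u₁ v₁ u₂ v₂ : ℂ} (ha : Compass a) (hc : Compass c)
    (hu₁ : Compass u₁) (hv₁ : Compass v₁) (hu₂ : Compass u₂) (hv₂ : Compass v₂) (hac : a ≠ c)
    (hza : ‖z - a‖ = ‖u₁ - v₁‖) (hzc : ‖z - c‖ = ‖u₂ - v₂‖) : Compass z := by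
  obtain ⟨e₁, he₁, hae₁⟩ := ha.exists_norm_sub_eq hu₁ hv₁
  obtain ⟨e₂, he₂, hce₂⟩ := hc.exists_norm_sub_eq hu₂ hv₂
  exact of_norm_sub_eq ha he₁ hc he₂ hac (hza.trans hae₁.symm) (hzc.trans hce₂.symm)

theorem add {a b : ℂ} (ha : Compass a) (hb : Compass b) : Compass (a + b) := by
  rcases eq_or_ne a b with rfl | hab
  · simpa [two_mul] using ha.two_mul_sub zero
  exact of_norm_sub_eq_norm_sub ha hb hb zero ha zero hab (by simp) (by simp)

theorem sub {a b : ℂ} (ha : Compass a) (hb : Compass b) : Compass (a - b) := by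
  simpa [sub_eq_add_neg] using ha.add hb.neg

theorem star {z : ℂ} (hz : Compass z) : Compass (conj z) :=
  of_norm_sub_eq zero hz one hz zero_ne_one (by simp) (norm_conj_sub_one z)

theorem natCast_mul {z : ℂ} (hz : Compass z) : ∀ n : ℕ, Compass (n * z)
  | 0 => by simpa using zero
  | n + 1 => by simpa [add_mul] using (hz.natCast_mul n).add hz

/-- Inversion in the unit circle: the circle about `conj z` through `0` meets the unit circle
(as `‖z‖ ≥ 1 / 2`) in `conj z * w` and `conj z * conj w`, whose sum is `conj z / ‖z‖ ^ 2 = z⁻¹`. -/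
theorem inv_of_one_le_two_mul_norm {z : ℂ} (hz : Compass z) (h : 1 ≤ 2 * ‖z‖) :
    Compass z⁻¹ := by
  have hz₀ : ‖z‖ ≠ 0 := by linarith
  obtain ⟨w, hw₁, hw⟩ := exists_norm_sub_one_eq_one_and_norm_eq (ρ := ‖z‖⁻¹) (by positivity)
    (by rw [inv_le_comm₀ (by positivity) two_pos]; linarith)
  have hq {v : ℂ} (hv₁ : ‖v - 1‖ = 1) (hv : ‖v‖ = ‖z‖⁻¹) : Compass (conj z * v) := by
    simpa using add_sub_mul zero hz.star one zero (w := v)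
      (by simp [hv, hz₀]) (by simp [hv₁])
  have hsum := (hq hw₁ hw).add (hq (by rw [norm_conj_sub_one, hw₁]) (by rw [norm_conj, hw]))
  rwa [← mul_add, add_conj_eq_norm_sq_of_norm_sub_one hw₁, hw, inv_pow, ← normSq_eq_norm_sq,
    ← inv_def] at hsum

theorem inv {z : ℂ} (hz : Compass z) : Compass z⁻¹ := by
  rcases eq_or_ne z 0 with rfl | hz₀
  · simpa using zero
  obtain ⟨n, hn⟩ := exists_nat_gt (2 * ‖z‖)⁻¹
  have hn₀ : (n : ℂ) ≠ 0 := by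
    exact_mod_cast (lt_trans (by positivity) hn : (0 : ℝ) < n).ne'
  have h := ((hz.natCast_mul n).inv_of_one_le_two_mul_norm ?_).natCast_mul n
  · rwa [mul_inv, ← mul_assoc, mul_inv_cancel₀ hn₀, one_mul] at h
  · rw [norm_mul, Complex.norm_natCast, mul_left_comm]
    exact ((inv_lt_iff_one_lt_mul₀ (by positivity)).1 hn).le

theorem div_natCast {z : ℂ} (hz : Compass z) (n : ℕ) : Compass (z / n) := by
  simpa [div_eq_mul_inv, mul_comm] using (hz.inv.natCast_mul n).inv

theorem sq {x : ℂ} (hx : Compass x) : Compass (x ^ 2) := by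
  rcases eq_or_ne x 0 with rfl | hx₀
  · simpa using zero
  rcases eq_or_ne x 1 with rfl | hx₁
  · simpa using one
  have hx₁' : x - 1 ≠ 0 := sub_ne_zero.2 hx₁
  have h : x ^ 2 = ((x - 1)⁻¹ - x⁻¹)⁻¹ + x := by
    field_simp
    ring
  rw [h]
  exact ((hx.sub one).inv.sub hx.inv).inv.add hx

theorem mul {a b : ℂ} (ha : Compass a) (hb : Compass b) : Compass (a * b) := by
  have h := ((((ha.add hb).sq).sub ha.sq).sub hb.sq).div_natCast 2
  convert h using 1
  push_cast
  ring

end Compass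

/-- 𝔠 is a subring of ℂ closed under complex conjugation. -/
theorem compass_subring_closed_under_conj :
    Compass 0 ∧ Compass 1 ∧
      ∀ a b : ℂ, Compass a → Compass b →
        Compass (a + b) ∧ Compass (-a) ∧ Compass (a * b) ∧
          Compass ((starRingEnd ℂ) a) :=
  ⟨Compass.zero, Compass.one, fun _ _ ha hb => ⟨ha.add hb, ha.neg, ha.mul hb, ha.star⟩⟩
end

section
/- If a, b ∈ 𝔠 then the midpoint (a + b)/2 ∈ 𝔠. -/
theorem setOf_norm_sub_eq_ne {E : Type*} [NormedAddCommGroup E] [NormedSpace ℝ E] {c₁ c₂ : E}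
    {r s : ℝ} (hr : 0 < r) (hc : c₁ ≠ c₂) :
    {w : E | ‖w - c₁‖ = r} ≠ {w : E | ‖w - c₂‖ = s} := by
  intro h
  have on_second (w : E) (hw : ‖w - c₁‖ = r) : ‖w - c₂‖ = s := (Set.ext_iff.mp h w).mp hw
  set u := c₁ - c₂
  have hu : 0 < ‖u‖ := norm_pos_iff.mpr (sub_ne_zero.mpr hc)
  set t := r / ‖u‖
  have ht : 0 < t := div_pos hr hu
  have htu : ‖t • u‖ = r := by
    rw [norm_smul, Real.norm_of_nonneg ht.le, div_mul_cancel₀ r hu.ne']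
  -- The two points of the first circle on the line of the centres are at different
  -- distances `(1 + t) ‖u‖` and `|1 - t| ‖u‖` from `c₂`.
  have far := on_second (c₁ + t • u) (by simpa using htu)
  have near := on_second (c₁ - t • u) (by simpa using htu)
  rw [show c₁ + t • u - c₂ = (1 + t) • u by simp [u, add_smul]; abel, norm_smul] at far
  rw [show c₁ - t • u - c₂ = (1 - t) • u by simp [u, sub_smul]; abel, norm_smul] at near
  have : ‖1 + t‖ = ‖1 - t‖ := mul_right_cancel₀ hu.ne' (far.trans near.symm)
  rw [Real.norm_eq_abs, Real.norm_eq_abs, abs_of_pos (by linarith)] at this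
  cases abs_cases (1 - t) <;> linarith

namespace Compass

theorem of_dist_eq {a b c d z : ℂ} (ha : Compass a) (hb : Compass b) (hc : Compass c)
    (hd : Compass d) (hza : dist z a = dist b a) (hzc : dist z c = dist d c) (hba : b ≠ a)
    (hac : a ≠ c) : Compass z := by
  rw [dist_eq_norm, dist_eq_norm] at hza hzc
  exact circle_circle a b c d z ha hb hc hd hza hzc
    (setOf_norm_sub_eq_ne (norm_pos_iff.mpr (sub_ne_zero.mpr hba)) hac)

theorem map {f : ℂ → ℂ} {k : ℝ} (hk : k ≠ 0) (hf : ∀ x y, ‖f x - f y‖ = k * ‖x - y‖)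
    (h0 : Compass (f 0)) (h1 : Compass (f 1)) {z : ℂ} (hz : Compass z) : Compass (f z) := by
  have preimage_circle (p q : ℂ) :
      f ⁻¹' {w | ‖w - f p‖ = ‖f q - f p‖} = {w | ‖w - p‖ = ‖q - p‖} := by
    ext w
    simp only [Set.mem_preimage, Set.mem_ofPred_eq, hf, mul_right_inj' hk]
  induction hz with
  | zero => exact h0
  | one => exact h1
  | circle_circle p q r s w _ _ _ _ hwp hwr hne ihp ihq ihr ihs =>
    refine circle_circle _ _ _ _ _ ihp ihq ihr ihs (by rw [hf, hf, hwp]) (by rw [hf, hf, hwr])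
      fun h => hne ?_
    rw [← preimage_circle p q, ← preimage_circle r s, h]

theorem affine {a b z : ℂ} (ha : Compass a) (hb : Compass b) (hz : Compass z) :
    Compass (a + (b - a) * z) := by
  rcases eq_or_ne a b with rfl | hab
  · simpa using ha
  refine map (f := fun w => a + (b - a) * w) (norm_ne_zero_iff.mpr (sub_ne_zero.mpr hab.symm))
    (fun x y => ?_) (by simpa using ha) (by simpa using hb) hz
  rw [← norm_mul, mul_sub, add_sub_add_left_eq_sub]

theorem two : Compass 2 := by
  have h₁ : Compass ⟨1 / 2, √3 / 2⟩ := by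
    refine of_dist_eq zero one one zero ?_ ?_ one_ne_zero zero_ne_one <;>
      rw [Complex.dist_eq_re_im, Complex.dist_eq_re_im] <;> norm_num [div_pow]
  have h₂ : Compass ⟨3 / 2, √3 / 2⟩ := by
    refine of_dist_eq one zero h₁ zero ?_ ?_ zero_ne_one (by norm_num [Complex.ext_iff]) <;>
      rw [Complex.dist_eq_re_im, Complex.dist_eq_re_im] <;> norm_num [div_pow]
  refine of_dist_eq one zero h₂ one ?_ ?_ zero_ne_one (by norm_num [Complex.ext_iff]) <;>
    rw [Complex.dist_eq_re_im, Complex.dist_eq_re_im] <;> norm_num [div_pow]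

theorem half : Compass 2⁻¹ := by
  have hP : Compass ⟨1 / 4, √15 / 4⟩ := by
    refine of_dist_eq zero one two zero ?_ ?_ one_ne_zero two_ne_zero.symm <;>
      rw [Complex.dist_eq_re_im, Complex.dist_eq_re_im] <;> norm_num [div_pow]
  have hQ : Compass ⟨1 / 4, -√15 / 4⟩ := by
    refine of_dist_eq zero one two zero ?_ ?_ one_ne_zero two_ne_zero.symm <;>
      rw [Complex.dist_eq_re_im, Complex.dist_eq_re_im] <;> norm_num [div_pow]
  refine of_dist_eq hP zero hQ zero ?_ ?_ (by norm_num [Complex.ext_iff])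
    (by norm_num [Complex.ext_iff, eq_neg_iff_add_eq_zero]) <;>
    rw [Complex.dist_eq_re_im, Complex.dist_eq_re_im] <;> norm_num [div_pow]

end Compass

theorem compass_midpoint (a b : ℂ) (ha : Compass a) (hb : Compass b) :
    Compass ((a + b) / 2) := by
  convert ha.affine hb Compass.half using 1
  ring
end
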